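/- Let A be a finite alphabet, a ∈ A, l a positive integer, and (σ_n : A → A* ; n ∈ ℕ) a sequence of morphisms of constant length l (i.e. |σ_n(b)| = l for every n and every b ∈ A), and suppose y = lim_{n→∞} σ_0σ_1⋯σ_n(aaa⋯) exists in A^ℕ. Then p_y(n) ≤ l (Card A)² n for all n ≥ 1. -/

import Mathlib

namespace DurandLR

variable {A B : Type*}

/-- `u` occurs at position `i` in the one-sided sequence `x`. -/
def OccursAt (x : ℕ → A) (u : List A) (i : ℕ) : Prop :=
  ∀ k : Fin u.length, x (i + (k : ℕ)) = u.get k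

/-- `u` occurs (somewhere) in the one-sided sequence `x`. -/
def Occurs (x : ℕ → A) (u : List A) : Prop := ∃ i, OccursAt x u i

/-- `u` occurs at position `i` in the two-sided sequence `x`. -/
def OccursAtZ (x : ℤ → A) (u : List A) (i : ℤ) : Prop :=
  ∀ k : Fin u.length, x (i + (k : ℕ)) = u.get k

def OccursZ (x : ℤ → A) (u : List A) : Prop := ∃ i, OccursAtZ x u i

/-- The word `u` has exactly `m` occurrences in the finite word `w`. -/
def OccCountEq (u w : List A) (m : ℕ) : Prop :=
  {i : ℕ | u <+: w.drop i}.ncard = m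

/-- `w` is a return word to `u` in the one-sided sequence `x`: `wu` occurs in `x`,
`u` is a prefix of `wu` and `u` has exactly two occurrences in `wu`. -/
def IsReturnWord (x : ℕ → A) (u w : List A) : Prop :=
  Occurs x (w ++ u) ∧ u <+: (w ++ u) ∧ OccCountEq u (w ++ u) 2

/-- `w` is a return word to `u` in the two-sided sequence `x`. -/
def IsReturnWordZ (x : ℤ → A) (u w : List A) : Prop :=
  OccursZ x (w ++ u) ∧ u <+: (w ++ u) ∧ OccCountEq u (w ++ u) 2

/-- `x` is uniformly recurrent: every word occurring in `x` occurs with bounded gaps. -/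
def UniformlyRecurrent (x : ℕ → A) : Prop :=
  ∀ u, Occurs x u → ∃ M : ℕ, ∀ i : ℕ, ∃ j, i ≤ j ∧ j < i + M ∧ OccursAt x u j

def UniformlyRecurrentZ (x : ℤ → A) : Prop :=
  ∀ u, OccursZ x u → ∃ M : ℕ, ∀ i : ℤ, ∃ j : ℤ, i ≤ j ∧ j < i + M ∧ OccursAtZ x u j

/-- `x` is linearly recurrent with constant `K`. -/
def LinearlyRecurrentWith (x : ℕ → A) (K : ℕ) : Prop :=
  UniformlyRecurrent x ∧ ∀ u w, IsReturnWord x u w → w.length ≤ K * u.length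

def LinearlyRecurrent (x : ℕ → A) : Prop := ∃ K, LinearlyRecurrentWith x K

def LinearlyRecurrentZ (x : ℤ → A) : Prop :=
  UniformlyRecurrentZ x ∧ ∃ K : ℕ, ∀ u w, IsReturnWordZ x u w → w.length ≤ K * u.length

/-- The subshift generated by a two-sided sequence `x` : all `z` whose finite subwords
occur in `x`. -/
def SubshiftGenZ (x : ℤ → A) : Set (ℤ → A) := {z | ∀ u, OccursZ z u → OccursZ x u}

/-- The subshift generated by a one-sided sequence `x`. -/
def SubshiftGen (x : ℕ → A) : Set (ℤ → A) := {z | ∀ u, OccursZ z u → Occurs x u}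

/-- A minimal subshift: nonempty and every element generates it. -/
def IsMinimalSubshift (X : Set (ℤ → A)) : Prop :=
  X.Nonempty ∧ ∀ z ∈ X, X = SubshiftGenZ z

/-- A linearly recurrent subshift: minimal and containing an LR sequence. -/
def IsLRSubshift (X : Set (ℤ → A)) : Prop :=
  IsMinimalSubshift X ∧ ∃ x ∈ X, LinearlyRecurrentZ x

def IsPeriodic (z : ℤ → A) : Prop := ∃ p : ℕ, 0 < p ∧ ∀ n : ℤ, z (n + p) = z n

/-- Image of a finite word under a morphism (substitution). -/
def wordMap (σ : A → List B) : List A → List B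
  | [] => []
  | a :: u => σ a ++ wordMap σ u

/-- Composition of two morphisms: `compM σ τ = σ ∘ τ`. -/
def compM (σ τ : A → List A) : A → List A := fun b => wordMap σ (τ b)

/-- Iterate of a morphism: `powM σ n = σ^n`. -/
def powM (σ : A → List A) : ℕ → A → List A
  | 0 => fun b => [b]
  | n + 1 => compM σ (powM σ n)

/-- `chain σ r n = σ_r ∘ σ_{r+1} ∘ ⋯ ∘ σ_{r+n-1}` (the empty composition for `n = 0`). -/
def chain (σ : ℕ → A → List A) (r : ℕ) : ℕ → A → List A
  | 0 => fun b => [b]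
  | n + 1 => fun b => wordMap (chain σ r n) (σ (r + n) b)

/-- The periodic infinite sequence `www⋯` obtained by repeating the word `w`
(with a default letter for the degenerate empty case). -/
def repSeq (w : List A) (d : A) : ℕ → A := fun i => w.getD (i % w.length) d

/-- The prefix of length `n` of the sequence `x`, as a word. -/
def seqTake (x : ℕ → A) (n : ℕ) : List A := (List.range n).map x

/-- `y` is the image of the infinite sequence `z` under the morphism `σ`:
the image of every prefix of `z` is a prefix of `y`. -/
def IsSeqImage (σ : A → List B) (z : ℕ → A) (y : ℕ → B) : Prop :=
  ∀ n, seqTake y (wordMap σ (seqTake z n)).length = wordMap σ (seqTake z n)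

/-- `σ_0 σ_1 ⋯ σ_n (aaa⋯)` converges to `x` in the product topology, where the `n`-th
approximation is the periodic sequence obtained by repeating the word `W n`. -/
def ConvergesTo (W : ℕ → List A) (d : A) (x : ℕ → A) : Prop :=
  ∀ m, ∃ N, ∀ n ≥ N, repSeq (W n) d m = x m

/-- A proper morphism: all images begin with the same letter and end with the same letter. -/
def ProperMorphism (σ : A → List A) : Prop :=
  ∃ l r : A, ∀ b, (σ b).head? = some l ∧ (σ b).getLast? = some r

/-- Primitivity with constant `s₀` of a directive sequence of morphisms
`σ_n : A_{n+1} → A_n^*`: every `b ∈ A_r` occurs in `σ_{r+1} ⋯ σ_{r+s₀} (c)`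
for every `c ∈ A_{r+s₀+1}`. -/
def PrimitiveWith (σ : ℕ → A → List A) (Aseq : ℕ → Set A) (s0 : ℕ) : Prop :=
  ∀ r : ℕ, ∀ b ∈ Aseq r, ∀ c ∈ Aseq (r + s0 + 1), b ∈ chain σ (r + 1) s0 c

/-- The data of an S-adic system: `a` belongs to every alphabet and
`σ_n` maps `A_{n+1}` into words over `A_n`. -/
def SAdicSystem (σ : ℕ → A → List A) (Aseq : ℕ → Set A) (a : A) : Prop :=
  (∀ n, a ∈ Aseq n) ∧ (∀ n, ∀ b ∈ Aseq (n + 1), ∀ c ∈ σ n b, c ∈ Aseq n)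

/-- `x` is the S-adic sequence generated by the directive sequence `σ` and letter `a`:
`σ_0 σ_1 ⋯ σ_n (aaa⋯)` converges to `x`. -/
def GeneratesSAdic (σ : ℕ → A → List A) (Aseq : ℕ → Set A) (a : A) (x : ℕ → A) : Prop :=
  SAdicSystem σ Aseq a ∧ ConvergesTo (fun n => chain σ 0 (n + 1) a) a x

/-- The complexity function `p_x(n)`: the number of distinct words of length `n`
occurring in `x`. -/
noncomputable def complexity (x : ℕ → A) (n : ℕ) : ℕ := {u : List A | u.length = n ∧ Occurs x u}.ncard

/-- Any two successive occurrences of `u` in `x` differ by at most `M`. -/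
def GapsBoundedBy (x : ℕ → A) (u : List A) (M : ℕ) : Prop :=
  ∀ i j, OccursAt x u i → OccursAt x u j → i < j →
    (∀ k, i < k → k < j → ¬ OccursAt x u k) → j - i ≤ M

/-- The finite word `x_{[p,q)}` of a two-sided sequence. -/
def zSeg (x : ℤ → A) (p q : ℤ) : List A := (List.range (q - p).toNat).map fun t => x (p + t)

/-- `w` is a return word to `u.v` in the two-sided sequence `x`: there are two
consecutive occurrences `j < k` of `uv` in `x` with `w = x_{[j+|u|, k+|u|)}`. -/
def IsReturnWordUV (x : ℤ → A) (u v w : List A) : Prop :=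
  ∃ j k : ℤ, OccursAtZ x (u ++ v) j ∧ OccursAtZ x (u ++ v) k ∧ j < k ∧
    (∀ i : ℤ, j < i → i < k → ¬ OccursAtZ x (u ++ v) i) ∧
    w = zSeg x (j + u.length) (k + u.length)

/-- The substitution `σ` on `{a,b,c} = {0,1,2}`: `σ(a)=acb`, `σ(b)=bab`, `σ(c)=cbc`. -/
def sigma3 : Fin 3 → List (Fin 3) := ![[0, 2, 1], [1, 0, 1], [2, 1, 2]]

/-- The substitution `τ` on `{a,b,c} = {0,1,2}`: `τ(a)=abc`, `τ(b)=acb`, `τ(c)=aac`. -/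
def tau3 : Fin 3 → List (Fin 3) := ![[0, 1, 2], [0, 2, 1], [0, 0, 2]]

/-- `rho n = σ τ σ² τ ⋯ σⁿ τ` (identity for `n = 0`). -/
def rho : ℕ → Fin 3 → List (Fin 3)
  | 0 => fun b => [b]
  | n + 1 => compM (rho n) (compM (powM sigma3 (n + 1)) tau3)

/-- `psi n l = σ^{n+2} τ σ^{n+3} τ ⋯ σ^{n+l+1} τ` (identity for `l = 0`). -/
def psi (n : ℕ) : ℕ → Fin 3 → List (Fin 3)
  | 0 => fun b => [b]
  | l + 1 => compM (psi n l) (compM (powM sigma3 (n + 2 + l)) tau3)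

/-- The Sturmian substitution `τ` on `{0,1}`: `τ(0)=0`, `τ(1)=10`. -/
def tau2 : Fin 2 → List (Fin 2) := ![[0], [1, 0]]

/-- The Sturmian substitution `σ` on `{0,1}`: `σ(0)=01`, `σ(1)=1`. -/
def sigma2 : Fin 2 → List (Fin 2) := ![[0, 1], [1]]

/-- `xi i k = τ^{i₁} σ^{i₂} τ^{i₃} ⋯ τ^{i_{2k-1}} σ^{i_{2k}}` (identity for `k = 0`). -/
def xi (i : ℕ → ℕ) : ℕ → Fin 2 → List (Fin 2)
  | 0 => fun b => [b]
  | k + 1 => compM (xi i k) (compM (powM tau2 (i (2 * k + 1))) (powM sigma2 (i (2 * k + 2))))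

/-- `a : ℕ → ℕ` gives (from index 1 on) the continued fraction expansion
`α = [0; a₁, a₂, a₃, …]`, expressed through the Gauss map. -/
def IsCFExpansion (α : ℝ) (a : ℕ → ℕ) : Prop :=
  ∃ β : ℕ → ℝ, β 0 = α ∧ ∀ n : ℕ,
    0 < β n ∧ β n < 1 ∧ (a (n + 1) : ℤ) = ⌊1 / β n⌋ ∧ β (n + 1) = 1 / β n - ⌊1 / β n⌋


/-! Take `k` with `n ≤ l ^ k ≤ l * n` and put `τ = σ₀ ⋯ σ_{k-1}`, a morphism of constant
length `L = l ^ k`. Since `σ₀ ⋯ σ_M (a) = τ (σ_k ⋯ σ_M (a))`, every prefix of `y` is a prefix of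
some `τ (w)`, so a factor of `y` of length `n ≤ L` is read in `τ (b c)` for two letters `b, c`,
starting at an offset `s < L`. Hence `p_y(n) ≤ (Card A)² L ≤ l (Card A)² n`. When `l = 1` the
approximations have length one and `y` is constant. -/

open Filter

section Morphisms

variable {C : Type*}

lemma wordMap_append (σ : A → List B) (u v : List A) :
    wordMap σ (u ++ v) = wordMap σ u ++ wordMap σ v := by
  induction u with
  | nil => simp [wordMap]
  | cons a u ih => simp [wordMap, ih]

lemma wordMap_length {σ : A → List B} {L : ℕ} (h : ∀ b, (σ b).length = L) (u : List A) :
    (wordMap σ u).length = L * u.length := by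
  induction u with
  | nil => simp [wordMap]
  | cons a u ih => simp [wordMap, ih, h]; ring

lemma wordMap_wordMap (f : B → List C) (g : A → List B) (u : List A) :
    wordMap f (wordMap g u) = wordMap (fun b => wordMap f (g b)) u := by
  induction u with
  | nil => rfl
  | cons a u ih => simp [wordMap, wordMap_append, ih]

end Morphisms

lemma chain_length {σ : ℕ → A → List A} {l : ℕ} (h : ∀ n b, (σ n b).length = l) :
    ∀ (m r : ℕ) (b : A), (chain σ r m b).length = l ^ m
  | 0, r, b => by simp [chain]
  | m + 1, r, b => by
    simp [chain, wordMap_length (chain_length h m r), h, pow_succ]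

lemma chain_add (σ : ℕ → A → List A) (r m : ℕ) :
    ∀ (n : ℕ) (b : A), chain σ r (m + n) b = wordMap (chain σ r m) (chain σ (r + m) n b)
  | 0, b => by simp [chain, wordMap]
  | n + 1, b => by
    rw [← Nat.add_assoc, chain, chain, funext (chain_add σ r m n), wordMap_wordMap,
      Nat.add_assoc]

lemma exists_window_of_wordMap {τ : A → List B} {L n i : ℕ} (hτ : ∀ b, (τ b).length = L)
    (hL : 0 < L) (hn : n ≤ L) (w : List A) (hi : i + 2 * L ≤ (wordMap τ w).length) :
    ∃ b c, ∃ s < L, ((wordMap τ w).drop i).take n = ((τ b ++ τ c).drop s).take n := by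
  set q := i / L
  set s := i % L
  have hiqs : i = L * q + s := (Nat.div_add_mod i L).symm
  have hs : s < L := Nat.mod_lt i hL
  have hq : q + 2 ≤ w.length := by
    rw [wordMap_length hτ] at hi
    exact Nat.le_of_mul_le_mul_left (by rw [Nat.mul_add]; omega) hL
  obtain ⟨b, c, rest, hrest⟩ : ∃ b c rest, w.drop q = b :: c :: rest := by
    match h : w.drop q with
    | b :: c :: rest => exact ⟨b, c, rest, rfl⟩
    | [] | [_] => have := congrArg List.length h; simp at this; omega
  have hsplit : wordMap τ w = wordMap τ (w.take q) ++ (τ b ++ τ c ++ wordMap τ rest) := by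
    conv_lhs => rw [← List.take_append_drop q w, hrest]
    simp [wordMap, wordMap_append]
  have hprefix : (wordMap τ (w.take q)).length = L * q := by
    rw [wordMap_length hτ, List.length_take, min_eq_left (by omega)]
  refine ⟨b, c, s, hs, ?_⟩
  rw [hsplit, hiqs, ← List.drop_drop, List.drop_left' hprefix,
    List.drop_append_of_le_length (by simp [hτ]; omega),
    List.take_append_of_le_length (by simp [hτ]; omega)]

lemma OccursAt.take_drop_eq {x : ℕ → A} {u V : List A} {i N : ℕ} (hu : OccursAt x u i)
    (hN : i + u.length ≤ N) (hV : seqTake x N <+: V) : (V.drop i).take u.length = u := by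
  have hVlen : N ≤ V.length := by simpa [seqTake] using hV.length_le
  refine List.ext_getElem (by simp; omega) fun j hj _ => ?_
  have hxV : x (i + j) = V[i + j] := by
    rw [← hV.getElem (by simp [seqTake]; omega)]
    simp [seqTake]
  simpa [← hxV] using hu ⟨j, by omega⟩

lemma exists_window_of_occurs {τ : B → List A} {L n : ℕ} (hτ : ∀ b, (τ b).length = L)
    (hL : 0 < L) (hn : n ≤ L) {x : ℕ → A} (hx : ∀ N, ∃ w, seqTake x N <+: wordMap τ w)
    {u : List A} (hu : Occurs x u) (hun : u.length = n) :
    ∃ b c, ∃ s < L, ((τ b ++ τ c).drop s).take n = u := by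
  obtain ⟨i, hi⟩ := hu
  obtain ⟨w, hw⟩ := hx (i + 2 * L)
  obtain ⟨b, c, s, hs, hwin⟩ :=
    exists_window_of_wordMap hτ hL hn w (by simpa [seqTake] using hw.length_le)
  exact ⟨b, c, s, hs, hwin ▸ hun ▸ hi.take_drop_eq (by omega) hw⟩

lemma ConvergesTo.eventually {W : ℕ → List A} {d : A} {x : ℕ → A} (hx : ConvergesTo W d x)
    (m : ℕ) : ∀ᶠ M in atTop, repSeq (W M) d m = x m :=
  eventually_atTop.2 (hx m)

lemma ConvergesTo.eventually_seqTake_prefix {W : ℕ → List A} {d : A} {x : ℕ → A}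
    (hx : ConvergesTo W d x) {N : ℕ} (hN : ∀ᶠ M in atTop, N ≤ (W M).length) :
    ∀ᶠ M in atTop, seqTake x N <+: W M := by
  have hagree : ∀ᶠ M in atTop, ∀ m ∈ Finset.range N, repSeq (W M) d m = x m :=
    (eventually_all_finset _).2 fun m _ => hx.eventually m
  filter_upwards [hN, hagree] with M hlen hagree
  rw [List.prefix_iff_eq_take]
  refine List.ext_getElem (by simp [seqTake]; omega) fun m hm _ => ?_
  simp only [seqTake, List.length_map, List.length_range] at hm
  have := hagree m (Finset.mem_range.2 hm)
  simp [seqTake, repSeq, Nat.mod_eq_of_lt (hm.trans_le hlen)] at this ⊢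
  rw [← this, List.getElem?_eq_getElem (by omega), Option.getD_some]

lemma exists_seqTake_prefix_wordMap_chain {σ : ℕ → A → List A} {l : ℕ}
    (hlen : ∀ n b, (σ n b).length = l) (hl : 1 < l) {a : A} {y : ℕ → A}
    (hy : ConvergesTo (fun n => chain σ 0 (n + 1) a) a y) (k N : ℕ) :
    ∃ w, seqTake y N <+: wordMap (chain σ 0 k) w := by
  have hN : ∀ᶠ M in atTop, N ≤ (chain σ 0 (M + 1) a).length := by
    filter_upwards [eventually_ge_atTop N] with M hM
    rw [chain_length hlen]
    exact (hM.trans (Nat.le_succ M)).trans (Nat.lt_pow_self hl).le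
  obtain ⟨M, hkM, hpre⟩ :=
    ((eventually_ge_atTop k).and (hy.eventually_seqTake_prefix hN)).exists
  have hsplit := chain_add σ 0 k (M + 1 - k) a
  rw [Nat.zero_add, Nat.add_sub_cancel' (by omega)] at hsplit
  exact ⟨_, hsplit ▸ hpre⟩

lemma ConvergesTo.eq_zero_of_length_eq_one {W : ℕ → List A} {d : A} {x : ℕ → A}
    (hx : ConvergesTo W d x) (hW : ∀ M, (W M).length = 1) (m : ℕ) : x m = x 0 := by
  obtain ⟨M, hm, h0⟩ := ((hx.eventually m).and (hx.eventually 0)).exists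
  rw [← hm, ← h0]
  simp [repSeq, hW, Nat.mod_one]

lemma complexity_le_card {ι : Type*} [Finite ι] {x : ℕ → A} {n : ℕ} (F : ι → List A)
    (hF : ∀ u, u.length = n → Occurs x u → u ∈ Set.range F) :
    complexity x n ≤ Nat.card ι :=
  calc complexity x n ≤ (Set.range F).ncard :=
        Set.ncard_le_ncard (fun u hu => hF u hu.1 hu.2) (Set.finite_range F)
    _ ≤ Nat.card ι := by
        rw [← Set.image_univ, ← Set.ncard_univ]
        exact Set.ncard_image_le Set.finite_univ

lemma complexity_le_one_of_forall_eq {x : ℕ → A} (hx : ∀ m, x m = x 0) (n : ℕ) :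
    complexity x n ≤ 1 := by
  refine (complexity_le_card (ι := Unit) (fun _ => List.replicate n (x 0))
    fun u hun ⟨i, hi⟩ => ⟨(), ?_⟩).trans_eq Nat.card_unique
  refine (List.eq_replicate_iff.2 ⟨hun, fun b hb => ?_⟩).symm
  obtain ⟨j, hj, rfl⟩ := List.getElem_of_mem hb
  simpa using (hi ⟨j, hj⟩).symm.trans (hx _)

lemma complexity_le_card_mul_of_seqTake_prefix [Fintype A] {τ : A → List A} {L n : ℕ}
    (hτ : ∀ b, (τ b).length = L) (hL : 0 < L) (hn : n ≤ L) {x : ℕ → A}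
    (hx : ∀ N, ∃ w, seqTake x N <+: wordMap τ w) :
    complexity x n ≤ Fintype.card A ^ 2 * L := by
  calc complexity x n ≤ Nat.card (A × A × Fin L) :=
        complexity_le_card (fun p => ((τ p.1 ++ τ p.2.1).drop p.2.2).take n) fun u hun hu => by
          obtain ⟨b, c, s, hs, rfl⟩ := exists_window_of_occurs hτ hL hn hx hu hun
          exact ⟨(b, c, ⟨s, hs⟩), rfl⟩
    _ = Fintype.card A ^ 2 * L := by simp [sq, mul_assoc]

lemma exists_pow_mem_Icc {l n : ℕ} (hl : 1 < l) (hn : n ≠ 0) : ∃ k, n ≤ l ^ k ∧ l ^ k ≤ l * n :=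
  ⟨Nat.log l n + 1, (Nat.lt_pow_succ_log_self hl n).le, by
    rw [pow_succ, mul_comm]; exact Nat.mul_le_mul_left l (Nat.pow_log_le_self l hn)⟩

/-- If `y` is the limit of `σ_0σ_1⋯σ_n(aaa⋯)` for morphisms of constant length `l`,
then `p_y(n) ≤ l (Card A)² n`. -/
theorem complexity_bound_constant_length {A : Type*} [Fintype A]
    (a : A) (l : ℕ) (hl : 0 < l)
    (σseq : ℕ → A → List A) (hlen : ∀ n b, (σseq n b).length = l)
    (y : ℕ → A) (hy : ConvergesTo (fun n => chain σseq 0 (n + 1) a) a y) :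
    ∀ n ≥ 1, complexity y n ≤ l * (Fintype.card A) ^ 2 * n := by
  intro n hn
  have hcard : 0 < Fintype.card A := Fintype.card_pos_iff.2 ⟨a⟩
  obtain rfl | hl : l = 1 ∨ 1 < l := by omega
  · have hconst := hy.eq_zero_of_length_eq_one fun M => by rw [chain_length hlen, one_pow]
    calc complexity y n ≤ 1 := complexity_le_one_of_forall_eq hconst n
      _ ≤ 1 * Fintype.card A ^ 2 * n := by
        rw [one_mul]; exact Nat.one_le_iff_ne_zero.2 (by positivity)
  · obtain ⟨k, hnk, hkn⟩ := exists_pow_mem_Icc hl (Nat.one_le_iff_ne_zero.1 hn)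
    calc complexity y n ≤ Fintype.card A ^ 2 * l ^ k :=
          complexity_le_card_mul_of_seqTake_prefix (chain_length hlen k 0) (by positivity) hnk
            (exists_seqTake_prefix_wordMap_chain hlen hl hy k)
      _ ≤ Fintype.card A ^ 2 * (l * n) := Nat.mul_le_mul_left _ hkn
      _ = l * Fintype.card A ^ 2 * n := by ring

end DurandLR
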